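/- arXiv:2308.01798 — 3 statements merged into one kernel-verified Lean document; each statement's English description precedes it below -/
import Mathlib

section
/- Let C and D be small categories and p : C ⥤ D a fully faithful functor. Suppose that for every functor V : D ⥤ Type, writing U := Lan_p (V ∘ p) (the left Kan extension of the restriction of V along p) with counit α : U ⟶ V, the induced map colim U → colim V is an isomorphism. Then p is final, i.e. each comma category StructuredArrow d p is connected. -/
/-!
Since `colim ∘ Lan_p ≅ colim`, the colimit of `U = Lan_p (V ∘ p)` is the colimit of `V ∘ p`, and
under this identification `colim α` is the canonical comparison `colim (V ∘ p) ⟶ colim V`.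
A functor is final exactly when this comparison is invertible for every `V : D ⥤ Type`.
-/

open CategoryTheory CategoryTheory.Limits

namespace CategoryTheory.Functor

variable {C D H : Type*} [Category* C] [Category* D] [Category* H] (L : C ⥤ D)
  [∀ F : C ⥤ H, L.HasLeftKanExtension F] [HasColimitsOfShape C H] [HasColimitsOfShape D H]

lemma lanCompColimIso_inv_app_comp_colimMap_lanAdjunction_counit_app (G : D ⥤ H) :
    L.lanCompColimIso.inv.app (L ⋙ G) ≫ colim.map ((L.lanAdjunction H).counit.app G) =
      colimit.pre G L := by
  refine colimit.hom_ext fun i ↦ ?_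
  simp

lemma isIso_colimMap_lanAdjunction_counit_app_iff (G : D ⥤ H) :
    IsIso (colim.map ((L.lanAdjunction H).counit.app G)) ↔ IsIso (colimit.pre G L) := by
  rw [← lanCompColimIso_inv_app_comp_colimMap_lanAdjunction_counit_app]
  exact (isIso_comp_left_iff _ _).symm

end CategoryTheory.Functor

theorem stmt2_general {C D : Type u} [SmallCategory C] [SmallCategory D] (p : C ⥤ D)
    (h : ∀ V : D ⥤ Type u,
      IsIso (colim.map ((p.lanAdjunction (Type u)).counit.app V))) :
    p.Final := by
  rw [Functor.final_iff_isIso_colimit_pre]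
  exact fun V ↦ (p.isIso_colimMap_lanAdjunction_counit_app_iff V).1 (h V)

/-- Let `p : C ⥤ D` be fully faithful.  If for every functor `V : D ⥤ Type`, writing
`U := Lan_p (V ∘ p)` with counit `α : U ⟶ V`, the induced map `colim U ⟶ colim V`
is an isomorphism, then `p` is final. -/
theorem stmt2 {C D : Type u} [SmallCategory C] [SmallCategory D] (p : C ⥤ D)
    [p.Full] [p.Faithful]
    (h : ∀ V : D ⥤ Type u,
      IsIso (colim.map ((p.lanAdjunction (Type u)).counit.app V))) :
    p.Final :=
  stmt2_general p h
end

section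
/- A small category K is sifted if and only if the colimit functor colim : (K ⥤ Type) ⥤ Type preserves finite products. -/
open CategoryTheory CategoryTheory.Limits

/-- A small category `K` is sifted if and only if the colimit functor
`colim : (K ⥤ Type) ⥤ Type` preserves finite products. -/
theorem stmt10 {K : Type u} [SmallCategory K] :
    IsSifted K ↔
      Nonempty (PreservesFiniteProducts (colim : (K ⥤ Type u) ⥤ Type u)) :=
  ⟨fun _ => ⟨IsSifted.colim_preservesFiniteProducts_of_isSifted⟩,
    fun ⟨_⟩ => IsSifted.of_colim_preservesFiniteProducts K⟩
end

section
/- Let C be a small category and X a presheaf on C lying in the sifted completion sInd(C) (i.e. X is a colimit of representables over a sifted index category). Then the category of elements of X, equivalently the comma category C ↓ X of representables over X, is sifted. -/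
/-!
If `X` is the colimit of `G ⋙ yoneda` over a sifted `J`, the functor `J ⥤ C ↓ X` sending `j` to
the colimit injection `yoneda (G j) ⟶ X` is final. A category admitting a final functor from a
sifted category is sifted.
-/

open CategoryTheory CategoryTheory.Limits

theorem isSifted_costructuredArrow_yoneda_of_isColimit {C : Type u} [SmallCategory C]
    {J : Type u} [SmallCategory J] [IsSifted J] {G : J ⥤ C} {c : Cocone (G ⋙ yoneda)}
    (hc : IsColimit c) : IsSifted (CostructuredArrow yoneda c.pt) :=
  have := Presheaf.final_toCostructuredArrow_comp_pre G hc
  IsSifted.of_final_functor_from_sifted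
    (c.toCostructuredArrow ⋙ CostructuredArrow.pre G yoneda c.pt)

/-- If a presheaf `X` on a small category `C` lies in the sifted completion of `C`
(i.e. `X` is a colimit of representables indexed by a sifted category), then the comma
category of representables over `X` (equivalently, the category of elements of `X`)
is sifted. -/
theorem stmt17 {C : Type u} [SmallCategory C] (X : Cᵒᵖ ⥤ Type u)
    (h : ∃ (J : Type u) (_ : SmallCategory J) (_ : IsSifted J) (G : J ⥤ C),
        Nonempty (colimit (G ⋙ yoneda) ≅ X)) :
    IsSifted (CostructuredArrow yoneda X) := by
  obtain ⟨J, _, _, G, ⟨e⟩⟩ := h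
  exact isSifted_costructuredArrow_yoneda_of_isColimit
    ((colimit.isColimit (G ⋙ yoneda)).extendIso e.hom)
end
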